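/- Suppose F is strictly convex and S is a nonempty, closed, convex subset of X. For any finite collection of points a_1, …, a_m ∈ X (m ≥ 1), the problem of minimizing x ↦ max{ρ_F(a_i − x) : i = 1, …, m} over S has at most one optimal solution. If additionally X is a reflexive Banach space or S is compact, then this problem has exactly one optimal solution. -/

import Mathlib

open Set Pointwise Filter Topology Bornology Function

variable {X : Type*} [NormedAddCommGroup X] [NormedSpace ℝ X]

/-- The Minkowski gauge of `F`: `ρ_F(x) = inf {t ≥ 0 : x ∈ t • F}`. -/
noncomputable def rhoF (F : Set X) (x : X) : ℝ :=
  sInf {t : ℝ | 0 ≤ t ∧ x ∈ t • F}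

/-- The maximal time function `C_F(x; Q) = sup {ρ_F(q - x) : q ∈ Q}`. -/
noncomputable def maxTime (F Q : Set X) (x : X) : ℝ :=
  sSup ((fun q => rhoF F (q - x)) '' Q)

/-- The minimal time function `T_F(x; Θ) = inf {ρ_F(q - x) : q ∈ Θ}`. -/
noncomputable def minTime (F Θ : Set X) (x : X) : ℝ :=
  sInf ((fun q => rhoF F (q - x)) '' Θ)

/-- A normed space is reflexive if the canonical embedding into its double dual is surjective. -/
def IsReflexiveSpace (Y : Type*) [NormedAddCommGroup Y] [NormedSpace ℝ Y] : Prop :=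
  Function.Surjective (NormedSpace.inclusionInDoubleDual ℝ Y)

/-! The objective `x ↦ maxᵢ ρ_F(aᵢ - x)` is a finite maximum of translated gauges, hence convex,
continuous and, since `F` is bounded, coercive. Strict convexity of `F` makes the gauge at a proper
convex combination of `u ≠ w` strictly smaller than `max (ρ_F u) (ρ_F w)`, so the midpoint of two
distinct minimizers would do strictly better. A minimizer exists on a compact `S` by
semicontinuity; in a reflexive space a sublevel set of the objective on `S` is closed, convex and
bounded, hence weakly compact, and the objective is weakly lower semicontinuous there. -/

-- `rhoF` also admits `t = 0`, which only matters at `x = 0` since `0 • F = {0}`.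
lemma rhoF_eq_gauge {F : Set X} (hF : F.Nonempty) : rhoF F = gauge F := by
  ext x
  rcases eq_or_ne x 0 with rfl | hx
  · rw [gauge_zero]
    exact IsLeast.csInf_eq ⟨⟨le_rfl, by simp [zero_smul_set hF]⟩, fun t ht => ht.1⟩
  · rw [rhoF, gauge_def]
    congr 1
    ext t
    refine ⟨fun ⟨ht, hxt⟩ => ⟨ht.lt_of_ne ?_, hxt⟩, fun ⟨ht, hxt⟩ => ⟨ht.le, hxt⟩⟩
    rintro rfl
    simp [zero_smul_set hF, hx] at hxt

lemma sub_smul_add_smul_of_add_eq_one {E : Type*} [AddCommGroup E] [Module ℝ E] (a x y : E)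
    {α β : ℝ} (hαβ : α + β = 1) : a - (α • x + β • y) = α • (a - x) + β • (a - y) := by
  obtain rfl : β = 1 - α := by linarith
  module

lemma ConvexOn.ciSup {E ι : Type*} [AddCommGroup E] [Module ℝ E] [Finite ι] [Nonempty ι]
    {s : Set E} {f : ι → E → ℝ} (hf : ∀ i, ConvexOn ℝ s (f i)) :
    ConvexOn ℝ s fun x => ⨆ i, f i x := by
  refine ⟨(hf (Classical.arbitrary ι)).1, fun x hx y hy α β hα hβ hαβ =>
    ciSup_le fun i => ((hf i).2 hx hy hα hβ hαβ).trans ?_⟩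
  gcongr
  · exact le_ciSup (finite_range fun i => f i x).bddAbove i
  · exact le_ciSup (finite_range fun i => f i y).bddAbove i

lemma subsingleton_setOf_isMin_of_exists_lt_max {α : Type*} {S : Set α} {g : α → ℝ}
    (h : ∀ x ∈ S, ∀ y ∈ S, x ≠ y → ∃ z ∈ S, g z < max (g x) (g y)) :
    {x ∈ S | ∀ y ∈ S, g x ≤ g y}.Subsingleton := by
  rintro x ⟨hxS, hx⟩ y ⟨hyS, hy⟩
  by_contra hxy
  obtain ⟨z, hzS, hz⟩ := h x hxS y hyS hxy
  exact (max_le (hx z hzS) ((hy x hxS).trans (hx z hzS))).not_gt hz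

section Gauge

variable {F : Set X}

lemma convexOn_gauge_sub (hc : Convex ℝ F) (habs : Absorbent ℝ F) (a : X) :
    ConvexOn ℝ univ fun x => gauge F (a - x) := by
  refine ⟨convex_univ, fun x _ y _ α β hα hβ hαβ => ?_⟩
  simpa only [sub_smul_add_smul_of_add_eq_one a x y hαβ, gauge_smul_of_nonneg hα,
    gauge_smul_of_nonneg hβ, smul_eq_mul] using gauge_add_le hc habs (α • (a - x)) (β • (a - y))

lemma isBounded_setOf_gauge_sub_le (hb : IsBounded F) (habs : Absorbent ℝ F) (a : X) (t : ℝ) :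
    IsBounded {x | gauge F (a - x) ≤ t} := by
  obtain ⟨r, hr, hFr⟩ := hb.subset_closedBall_lt 0 0
  refine (Metric.isBounded_closedBall (x := a) (r := t * r)).subset fun x hx => ?_
  rw [Metric.mem_closedBall, dist_comm, dist_eq_norm]
  calc ‖a - x‖ ≤ gauge F (a - x) * r :=
        (div_le_iff₀ hr).mp (le_gauge_of_subset_closedBall habs hr.le hFr)
    _ ≤ t * r := by gcongr; exact hx

lemma StrictConvex.gauge_combo_lt_max (hs : StrictConvex ℝ F) (hc : IsClosed F)
    (hb : IsBounded F) (h0 : F ∈ 𝓝 0) {u w : X} (huw : u ≠ w) {α β : ℝ} (hα : 0 < α)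
    (hβ : 0 < β) (hαβ : α + β = 1) :
    gauge F (α • u + β • w) < max (gauge F u) (gauge F w) := by
  have habs : Absorbent ℝ F := absorbent_nhds_zero h0
  set v := max (gauge F u) (gauge F w)
  obtain hv | hv := (le_max_of_le_left (gauge_nonneg u) : 0 ≤ v).eq_or_lt
  · have hzero : ∀ z, gauge F z ≤ v → z = 0 := fun z hz =>
      (gauge_eq_zero habs (NormedSpace.isVonNBounded_of_isBounded ℝ hb)).mp
        (le_antisymm (hz.trans hv.ge) (gauge_nonneg z))
    exact absurd ((hzero u (le_max_left _ _)).trans (hzero w (le_max_right _ _)).symm) huw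
  · have hmem : ∀ z, gauge F z ≤ v → v⁻¹ • z ∈ F := fun z hz => by
      rw [← hc.closure_eq, ← gauge_le_one_iff_mem_closure hs.convex h0,
        gauge_smul_of_nonneg (inv_nonneg.2 hv.le), smul_eq_mul]
      exact inv_mul_le_one_of_le₀ hz hv.le
    have hint := hs (hmem u (le_max_left _ _)) (hmem w (le_max_right _ _))
      ((smul_right_injective X (inv_ne_zero hv.ne')).ne huw) hα hβ hαβ
    rw [← gauge_lt_one_iff_mem_interior hs.convex h0, smul_comm α, smul_comm β, ← smul_add,
      gauge_smul_of_nonneg (inv_nonneg.2 hv.le), smul_eq_mul] at hint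
    exact (inv_mul_lt_one₀ hv).mp hint

lemma StrictConvex.ciSup_gauge_sub_combo_lt_max {ι : Type*} [Finite ι] [Nonempty ι]
    (hs : StrictConvex ℝ F) (hc : IsClosed F) (hb : IsBounded F) (h0 : F ∈ 𝓝 0) (a : ι → X)
    {x y : X} (hxy : x ≠ y) {α β : ℝ} (hα : 0 < α) (hβ : 0 < β) (hαβ : α + β = 1) :
    ⨆ i, gauge F (a i - (α • x + β • y)) <
      max (⨆ i, gauge F (a i - x)) (⨆ i, gauge F (a i - y)) := by
  obtain ⟨i, hi⟩ := exists_eq_ciSup_of_finite (f := fun i => gauge F (a i - (α • x + β • y)))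
  rw [← hi, sub_smul_add_smul_of_add_eq_one _ _ _ hαβ]
  calc _ < max (gauge F (a i - x)) (gauge F (a i - y)) :=
        hs.gauge_combo_lt_max hc hb h0 (sub_right_injective.ne hxy) hα hβ hαβ
    _ ≤ _ := max_le_max (le_ciSup (finite_range fun i => gauge F (a i - x)).bddAbove i)
        (le_ciSup (finite_range fun i => gauge F (a i - y)).bddAbove i)

end Gauge

section WeakTopology

open NormedSpace

lemma Convex.isClosed_toWeakSpace_image {C : Set X} (hconv : Convex ℝ C) (hc : IsClosed C) :
    IsClosed (toWeakSpace ℝ X '' C) := by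
  rw [← hc.closure_eq, hconv.toWeakSpace_closure ℝ]
  exact isClosed_closure

lemma IsReflexiveSpace.isCompact_toWeakSpace_image (hX : IsReflexiveSpace X) {C : Set X}
    (hb : IsBounded C) (hc : IsClosed C) (hconv : Convex ℝ C) :
    IsCompact (toWeakSpace ℝ X '' C) := by
  rw [← (hconv.isClosed_toWeakSpace_image hc).closure_eq]
  refine isCompact_closure_of_isBounded ℝ X _
    (by rwa [(toWeakSpace ℝ X).injective.preimage_image]) ?_
  rintro φ -
  obtain ⟨x, hx⟩ := hX (WeakDual.toStrongDual φ)
  exact ⟨toWeakSpace ℝ X x, congrArg StrongDual.toWeakDual hx⟩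

lemma LowerSemicontinuousOn.isClosed_sep_le {α : Type*} [TopologicalSpace α] {S : Set α}
    {g : α → ℝ} (hg : LowerSemicontinuousOn g S) (hS : IsClosed S) (t : ℝ) :
    IsClosed {x ∈ S | g x ≤ t} := by
  obtain ⟨v, hv, hSv⟩ := lowerSemicontinuousOn_iff_preimage_Iic.mp hg t
  exact (show {x ∈ S | g x ≤ t} = S ∩ v from hSv) ▸ hS.inter hv

lemma LowerSemicontinuousOn.comp_toWeakSpace_symm {S : Set X} {g : X → ℝ}
    (hg : LowerSemicontinuousOn g S) (hS : IsClosed S) (hgq : QuasiconvexOn ℝ S g) :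
    LowerSemicontinuousOn (g ∘ (toWeakSpace ℝ X).symm) (toWeakSpace ℝ X '' S) := by
  refine lowerSemicontinuousOn_iff_preimage_Iic.mpr fun t =>
    ⟨_, (hgq t).isClosed_toWeakSpace_image (hg.isClosed_sep_le hS t), ?_⟩
  ext y
  obtain ⟨x, rfl⟩ := (toWeakSpace ℝ X).surjective y
  simp

lemma IsReflexiveSpace.exists_isMinOn (hX : IsReflexiveSpace X) {S : Set X} (hne : S.Nonempty)
    (hS : IsClosed S) {g : X → ℝ} (hg : LowerSemicontinuousOn g S) (hgq : QuasiconvexOn ℝ S g)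
    (hgb : ∀ t, IsBounded {x ∈ S | g x ≤ t}) : ∃ x ∈ S, IsMinOn g S x := by
  obtain ⟨x₀, hx₀⟩ := hne
  set K := {x ∈ S | g x ≤ g x₀}
  have hK : IsCompact (toWeakSpace ℝ X '' K) :=
    hX.isCompact_toWeakSpace_image (hgb _) (hg.isClosed_sep_le hS _) (hgq _)
  obtain ⟨_, ⟨x, hxK, rfl⟩, hmin⟩ := LowerSemicontinuousOn.exists_isMinOn
    ⟨_, mem_image_of_mem _ (show x₀ ∈ K from ⟨hx₀, le_rfl⟩)⟩ hK
    ((hg.comp_toWeakSpace_symm hS hgq).mono (image_mono (sep_subset _ _)))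
  refine ⟨x, hxK.1, isMinOn_iff.mpr fun z hz => ?_⟩
  by_cases hz₀ : g z ≤ g x₀
  · simpa using isMinOn_iff.mp hmin _ (mem_image_of_mem _ ⟨hz, hz₀⟩)
  · exact hxK.2.trans (le_of_not_ge hz₀)

end WeakTopology

theorem stmt13_general (F : Set X)
    (hFc : IsClosed F) (hFb : IsBounded F)
    (hF0 : (0 : X) ∈ interior F) (hFs : StrictConvex ℝ F)
    (S : Set X) (hSne : S.Nonempty) (hSc : IsClosed S) (hSconv : Convex ℝ S)
    (m : ℕ) (hm : 1 ≤ m) (a : Fin m → X) :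
    {x ∈ S | ∀ y ∈ S,
      sSup (Set.range fun i => rhoF F (a i - x)) ≤
        sSup (Set.range fun i => rhoF F (a i - y))}.Subsingleton ∧
    (((CompleteSpace X ∧ IsReflexiveSpace X) ∨ IsCompact S) →
      ∃! x : X, x ∈ S ∧ ∀ y ∈ S,
        sSup (Set.range fun i => rhoF F (a i - x)) ≤
          sSup (Set.range fun i => rhoF F (a i - y))) := by
  have : Nonempty (Fin m) := ⟨⟨0, hm⟩⟩
  have hF : F ∈ 𝓝 0 := mem_interior_iff_mem_nhds.mp hF0
  have habs : Absorbent ℝ F := absorbent_nhds_zero hF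
  simp only [rhoF_eq_gauge ⟨0, mem_of_mem_nhds hF⟩]
  set g : X → ℝ := fun x => ⨆ i, gauge F (a i - x)
  have hgconv : ConvexOn ℝ S g := ConvexOn.ciSup fun i =>
    (convexOn_gauge_sub hFs.convex habs (a i)).subset (subset_univ S) hSconv
  have hglsc : LowerSemicontinuousOn g S := (lowerSemicontinuous_ciSup
    (fun x => (finite_range _).bddAbove) fun i =>
      ((continuous_gauge hFs.convex hF).comp (continuous_sub_left (a i))).lowerSemicontinuous
    ).lowerSemicontinuousOn S
  have huniq : {x ∈ S | ∀ y ∈ S, g x ≤ g y}.Subsingleton :=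
    subsingleton_setOf_isMin_of_exists_lt_max fun x hx y hy hxy =>
      ⟨_, hSconv hx hy one_half_pos.le one_half_pos.le (add_halves 1),
        hFs.ciSup_gauge_sub_combo_lt_max hFc hFb hF a hxy one_half_pos one_half_pos
          (add_halves 1)⟩
  refine ⟨huniq, fun hex => ?_⟩
  obtain ⟨x, hxS, hx⟩ : ∃ x ∈ S, IsMinOn g S x := by
    rcases hex with ⟨-, hX⟩ | hScomp
    · exact hX.exists_isMinOn hSne hSc hglsc hgconv.quasiconvexOn fun t =>
        (isBounded_setOf_gauge_sub_le hFb habs (a ⟨0, hm⟩) t).subset fun x hx =>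
          (le_ciSup (finite_range _).bddAbove _).trans hx.2
    · exact hglsc.exists_isMinOn hSne hScomp
  exact ⟨x, ⟨hxS, isMinOn_iff.mp hx⟩, fun y hy => huniq hy ⟨hxS, isMinOn_iff.mp hx⟩⟩

/-- Corollary 3.7. -/
theorem stmt13 (F : Set X)
    (hFc : IsClosed F) (hFb : IsBounded F) (hFconv : Convex ℝ F)
    (hF0 : (0 : X) ∈ interior F) (hFs : StrictConvex ℝ F)
    (S : Set X) (hSne : S.Nonempty) (hSc : IsClosed S) (hSconv : Convex ℝ S)
    (m : ℕ) (hm : 1 ≤ m) (a : Fin m → X) :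
    {x ∈ S | ∀ y ∈ S,
      sSup (Set.range fun i => rhoF F (a i - x)) ≤
        sSup (Set.range fun i => rhoF F (a i - y))}.Subsingleton ∧
    (((CompleteSpace X ∧ IsReflexiveSpace X) ∨ IsCompact S) →
      ∃! x : X, x ∈ S ∧ ∀ y ∈ S,
        sSup (Set.range fun i => rhoF F (a i - x)) ≤
          sSup (Set.range fun i => rhoF F (a i - y))) :=
  stmt13_general F hFc hFb hF0 hFs S hSne hSc hSconv m hm a
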